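/- arXiv:math/0612081 — 2 statements merged into one kernel-verified Lean document; each statement's English description precedes it below -/
import Mathlib

section
/- Let 0 → L → M → N → 0 be a short exact sequence of Z_p-modules. Assume: (i) L_Div is cofinitely generated and Cotor(L) has finite exponent; (ii) M is divisible; (iii) N is cofinitely generated and divisible. Then L and M are cofinitely generated Z_p-modules. -/
/-
Dualise with `(-)^∨ = Hom(-, ℚ_p/ℤ_p)`, which is exact because `ℚ_p/ℤ_p` is divisible,
hence injective over the principal ideal domain `ℤ_p`. Let `n` kill `Cotor(L)`, so
`nL ⊆ L_Div`, and let `B ⊆ M^∨` consist of the characters vanishing on `f(L_Div)`. Then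
`M^∨/B` embeds into `L_Div^∨`, while `nB` lies in `g^*(N^∨)`; since `M` is divisible,
multiplication by `n` is injective on `M^∨`, so `B` is finitely generated as well. Hence `M^∨`
is finitely generated, and so is its quotient `L^∨`.
-/

abbrev QpModZp (p : ℕ) [Fact p.Prime] :=
  ℚ_[p] ⧸ LinearMap.range (Algebra.linearMap ℤ_[p] ℚ_[p])

def CofinGen (p : ℕ) [Fact p.Prime] (A : Type*) [AddCommGroup A] [Module ℤ_[p] A] : Prop :=
  Module.Finite ℤ_[p] (A →ₗ[ℤ_[p]] QpModZp p)

def IsDivisibleSubmodule (p : ℕ) [Fact p.Prime] {A : Type*} [AddCommGroup A] [Module ℤ_[p] A]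
    (D : Submodule ℤ_[p] A) : Prop :=
  ∀ x ∈ D, ∃ y ∈ D, (p : ℤ_[p]) • y = x

noncomputable def divPart (p : ℕ) [Fact p.Prime] (A : Type*) [AddCommGroup A] [Module ℤ_[p] A] :
    Submodule ℤ_[p] A :=
  sSup {D | IsDivisibleSubmodule p D}

abbrev Cotor (p : ℕ) [Fact p.Prime] (A : Type*) [AddCommGroup A] [Module ℤ_[p] A] :=
  A ⧸ divPart p A

open Function LinearMap

theorem Module.Baer.of_smul_surjective {R Q : Type*} [CommRing R] [IsPrincipalIdealRing R]
    [AddCommGroup Q] [Module R Q] (hQ : ∀ a : R, a ≠ 0 → Surjective (a • · : Q → Q)) :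
    Module.Baer R Q := fun I g ↦ by
  obtain ⟨m, rfl⟩ := IsPrincipalIdealRing.principal I
  obtain rfl | hm := eq_or_ne m 0
  · refine ⟨0, fun n hn ↦ ?_⟩
    rw [Submodule.span_zero_singleton] at hn
    subst hn
    exact (map_zero g).symm
  obtain ⟨q, hq : m • q = _⟩ := hQ m hm (g ⟨m, Submodule.mem_span_singleton_self m⟩)
  refine ⟨toSpanSingleton R Q q, fun n hn ↦ ?_⟩
  obtain ⟨c, rfl⟩ := Submodule.mem_span_singleton.mp hn
  rw [toSpanSingleton_apply, smul_assoc, hq, ← map_smul]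
  rfl

lemma LinearMap.smul_injective_of_smul_surjective {R M Q : Type*} [CommRing R]
    [AddCommGroup M] [Module R M] [AddCommGroup Q] [Module R Q] {a : R}
    (ha : Surjective (a • · : M → M)) :
    Injective (a • · : (M →ₗ[R] Q) → (M →ₗ[R] Q)) := by
  intro ψ₁ ψ₂ h
  ext m
  obtain ⟨m, rfl⟩ := ha m
  simpa only [map_smul, smul_apply] using congr($h m)

theorem LinearMap.finite_dual_of_exact_of_smul_mem {R Q L M N : Type*} [CommRing R]
    [IsNoetherianRing R] [AddCommGroup Q] [Module R Q] [AddCommGroup L] [Module R L]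
    [AddCommGroup M] [Module R M] [AddCommGroup N] [Module R N]
    {f : L →ₗ[R] M} {g : M →ₗ[R] N} (hfg : Exact f g) (hg : Surjective g)
    {D : Submodule R L} {a : R} (haD : ∀ x, a • x ∈ D) (ha : Surjective (a • · : M → M))
    [Module.Finite R (N →ₗ[R] Q)] [Module.Finite R (D →ₗ[R] Q)] :
    Module.Finite R (M →ₗ[R] Q) := by
  let restrict := lcomp R Q (f ∘ₗ D.subtype)
  let smulA := DistribSMul.toLinearMap R (M →ₗ[R] Q) a
  have hB : (ker restrict).map smulA ≤ range (lcomp R Q g) := by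
    rintro _ ⟨ψ, hψ, rfl⟩
    refine ((exact_lcomp_of_exact_of_surjective Q hfg hg) _).mp ?_
    ext l
    simpa [restrict, smulA, map_smul] using congr($hψ ⟨a • l, haD l⟩)
  have hB_fg : (ker restrict).FG := by
    refine Submodule.fg_of_fg_map_injective smulA (smul_injective_of_smul_surjective ha) ?_
    rw [← Submodule.map_comap_eq_self hB]
    exact (IsNoetherian.noetherian _).map _
  refine ⟨Submodule.fg_of_fg_map_of_fg_inf_ker restrict (IsNoetherian.noetherian _) ?_⟩
  rwa [top_inf_eq]

namespace PadicInt

variable {p : ℕ} [Fact p.Prime]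

lemma smul_surjective_of_p_smul_surjective {A : Type*} [AddCommGroup A] [Module ℤ_[p] A]
    (hA : Surjective ((p : ℤ_[p]) • · : A → A)) {a : ℤ_[p]} (ha : a ≠ 0) :
    Surjective (a • · : A → A) := by
  have h : (a • · : A → A) =
      ((unitCoeff ha : ℤ_[p]) • ·) ∘ ((p : ℤ_[p]) • ·)^[a.valuation] := by
    ext x
    rw [comp_apply, smul_iterate, smul_smul, ← unitCoeff_spec ha]
  rw [h]
  exact (MulAction.bijective (unitCoeff ha)).surjective.comp (hA.iterate _)

end PadicInt

namespace QpModZp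

variable {p : ℕ} [Fact p.Prime]

lemma smul_surjective {a : ℤ_[p]} (ha : a ≠ 0) :
    Surjective (a • · : QpModZp p → QpModZp p) := by
  have ha' : (a : ℚ_[p]) ≠ 0 := PadicInt.coe_ne_zero.mpr ha
  intro x
  obtain ⟨q, rfl⟩ := Submodule.Quotient.mk_surjective _ x
  refine ⟨Submodule.Quotient.mk ((a : ℚ_[p])⁻¹ * q), ?_⟩
  change a • Submodule.Quotient.mk _ = _
  rw [← Submodule.Quotient.mk_smul, Algebra.smul_def, PadicInt.algebraMap_apply,
    mul_inv_cancel_left₀ ha']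

lemma baer : Module.Baer ℤ_[p] (QpModZp p) :=
  .of_smul_surjective fun _ ↦ smul_surjective

end QpModZp

theorem stmt2_general {p : ℕ} [Fact p.Prime]
    {L M N : Type*} [AddCommGroup L] [Module ℤ_[p] L] [AddCommGroup M] [Module ℤ_[p] M]
    [AddCommGroup N] [Module ℤ_[p] N]
    (f : L →ₗ[ℤ_[p]] M) (g : M →ₗ[ℤ_[p]] N)
    (hf : Function.Injective f) (hg : Function.Surjective g)
    (hfg : LinearMap.range f = LinearMap.ker g)
    (hLdiv : CofinGen p (divPart p L))
    (hLcot : ∃ n : ℕ, 0 < n ∧ ∀ x : Cotor p L, n • x = 0)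
    (hMdiv : IsDivisibleSubmodule p (⊤ : Submodule ℤ_[p] M))
    (hNcofin : CofinGen p N) :
    CofinGen p L ∧ CofinGen p M := by
  obtain ⟨n, hn, hn_cotor⟩ := hLcot
  have hnL : ∀ x : L, (n : ℤ_[p]) • x ∈ divPart p L := fun x ↦ by
    simpa [← Submodule.Quotient.mk_smul, Nat.cast_smul_eq_nsmul]
      using hn_cotor (Submodule.Quotient.mk x)
  have hnM : Surjective ((n : ℤ_[p]) • · : M → M) := by
    refine PadicInt.smul_surjective_of_p_smul_surjective (fun x ↦ ?_) (by exact_mod_cast hn.ne')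
    obtain ⟨y, -, hy⟩ := hMdiv x trivial
    exact ⟨y, hy⟩
  have : Module.Finite ℤ_[p] (N →ₗ[ℤ_[p]] QpModZp p) := hNcofin
  have : Module.Finite ℤ_[p] (divPart p L →ₗ[ℤ_[p]] QpModZp p) := hLdiv
  have hM : CofinGen p M := finite_dual_of_exact_of_smul_mem (exact_iff.mpr hfg.symm) hg hnL hnM
  have hf_dual : Surjective (lcomp ℤ_[p] (QpModZp p) f) := fun φ ↦
    QpModZp.baer.extension_property f hf φ
  have : Module.Finite ℤ_[p] (M →ₗ[ℤ_[p]] QpModZp p) := hM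
  exact ⟨Module.Finite.of_surjective _ hf_dual, hM⟩

/-- Lemma 1.3 (2): let `0 → L → M → N → 0` be a short exact sequence of `ℤ_p`-modules such
that `L_Div` is cofinitely generated, `Cotor(L)` has finite exponent, `M` is divisible and
`N` is cofinitely generated and divisible.  Then `L` and `M` are cofinitely generated. -/
theorem stmt2 {p : ℕ} [Fact p.Prime]
    {L M N : Type*} [AddCommGroup L] [Module ℤ_[p] L] [AddCommGroup M] [Module ℤ_[p] M]
    [AddCommGroup N] [Module ℤ_[p] N]
    (f : L →ₗ[ℤ_[p]] M) (g : M →ₗ[ℤ_[p]] N)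
    (hf : Function.Injective f) (hg : Function.Surjective g)
    (hfg : LinearMap.range f = LinearMap.ker g)
    (hLdiv : CofinGen p (divPart p L))
    (hLcot : ∃ n : ℕ, 0 < n ∧ ∀ x : Cotor p L, n • x = 0)
    (hMdiv : IsDivisibleSubmodule p (⊤ : Submodule ℤ_[p] M))
    (hNcofin : CofinGen p N)
    (hNdiv : IsDivisibleSubmodule p (⊤ : Submodule ℤ_[p] N)) :
    CofinGen p L ∧ CofinGen p M :=
  stmt2_general f g hf hg hfg hLdiv hLcot hMdiv hNcofin
end

section
/- Let L be a Z_p-module such that L_Div is cofinitely generated and Cotor(L) = L/L_Div has finite exponent. Then Ext¹_{Z_p}(Q_p, L) = 0. -/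
/-!
The divisible part `D = L_Div` is a divisible module over the principal ideal domain `ℤ_p`, hence
injective, so `D → E` has a retraction `ρ`. If `n` kills `Cotor L = L / D`, then
`n • (id - ι ∘ ρ)` vanishes on `ι L` and therefore factors through `π` as a map `ψ : ℚ_p → E` with
`π ∘ ψ = n`. As `n` is invertible in `ℚ_p`, `ψ ∘ n⁻¹` is a section of `π`.
-/

theorem Module.Baer.of_divisible_of_isPrincipalIdealRing {R Q : Type*} [CommRing R]
    [IsPrincipalIdealRing R] [AddCommGroup Q] [Module R Q]
    (hQ : ∀ r : R, r ≠ 0 → ∀ x : Q, ∃ y, r • y = x) : Module.Baer R Q := fun I g ↦ by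
  obtain ⟨a, rfl⟩ := IsPrincipalIdealRing.principal I
  obtain rfl | ha := eq_or_ne a 0
  · refine ⟨0, fun r hr ↦ ?_⟩
    rw [Submodule.span_zero_singleton, Submodule.mem_bot] at hr
    subst hr
    exact (map_zero g).symm
  obtain ⟨y, hy⟩ := hQ a ha (g ⟨a, Submodule.mem_span_singleton_self a⟩)
  refine ⟨LinearMap.toSpanSingleton R Q y, fun x hx ↦ ?_⟩
  obtain ⟨r, rfl⟩ := Submodule.mem_span_singleton.mp hx
  rw [LinearMap.toSpanSingleton_apply, smul_assoc, hy, ← map_smul, SetLike.mk_smul_mk]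

theorem exists_comp_eq_smul_id_of_smul_mem {R L E M : Type*} [CommRing R]
    [AddCommGroup L] [Module R L] [AddCommGroup E] [Module R E] [AddCommGroup M] [Module R M]
    {D : Submodule R L} (hD : Module.Baer R D) {c : R} (hc : ∀ x : L, c • x ∈ D)
    {ι : L →ₗ[R] E} {π : E →ₗ[R] M} (hι : Function.Injective ι) (hπ : Function.Surjective π)
    (hexact : Function.Exact ι π) :
    ∃ ψ : M →ₗ[R] E, π ∘ₗ ψ = c • LinearMap.id := by
  obtain ⟨ρ, hρ⟩ := hD.extension_property (ι ∘ₗ D.subtype) (hι.comp Subtype.val_injective)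
    LinearMap.id
  have hπι (l : L) : π (ι l) = 0 := hexact.apply_apply_eq_zero l
  let φ : E →ₗ[R] E := c • (LinearMap.id - ι ∘ₗ D.subtype ∘ₗ ρ)
  have hφ : LinearMap.ker π ≤ LinearMap.ker φ := by
    intro e he
    rw [LinearMap.mem_ker]
    obtain ⟨l, rfl⟩ := (hexact e).mp he
    have hρι : ρ (ι (c • l)) = ⟨c • l, hc l⟩ := LinearMap.congr_fun hρ ⟨c • l, hc l⟩
    calc φ (ι l) = ι (c • l) - ι (ρ (ι (c • l))) := by simp [φ, smul_sub]
      _ = 0 := by rw [hρι, sub_self]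
  refine ⟨(LinearMap.ker π).liftQ φ hφ ∘ₗ (π.quotKerEquivOfSurjective hπ).symm.toLinearMap, ?_⟩
  ext m
  obtain ⟨e, rfl⟩ := hπ m
  have he : (π.quotKerEquivOfSurjective hπ).symm (π e) = Submodule.Quotient.mk e :=
    (LinearEquiv.symm_apply_eq _).mpr rfl
  simp [he, φ, hπι]

section divPart

variable {p : ℕ} [Fact p.Prime] {L : Type*} [AddCommGroup L] [Module ℤ_[p] L]

theorem IsDivisibleSubmodule.exists_pow_smul_eq {D : Submodule ℤ_[p] L}
    (hD : IsDivisibleSubmodule p D) (n : ℕ) {x : L} (hx : x ∈ D) :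
    ∃ y ∈ D, (p : ℤ_[p]) ^ n • y = x := by
  induction n generalizing x with
  | zero => exact ⟨x, hx, one_smul _ x⟩
  | succ n ih =>
    obtain ⟨y, hy, rfl⟩ := hD x hx
    obtain ⟨z, hz, rfl⟩ := ih hy
    exact ⟨z, hz, by rw [pow_succ', mul_smul]⟩

theorem IsDivisibleSubmodule.exists_smul_eq {D : Submodule ℤ_[p] L}
    (hD : IsDivisibleSubmodule p D) {c : ℤ_[p]} (hc : c ≠ 0) {x : L} (hx : x ∈ D) :
    ∃ y ∈ D, c • y = x := by
  obtain ⟨y, hy, rfl⟩ := hD.exists_pow_smul_eq c.valuation hx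
  obtain ⟨u, hu⟩ : ∃ u : ℤ_[p]ˣ, c = u * (p : ℤ_[p]) ^ c.valuation :=
    ⟨_, PadicInt.unitCoeff_spec hc⟩
  refine ⟨u⁻¹ • y, D.smul_of_tower_mem _ hy, ?_⟩
  conv_lhs => rw [hu]
  rw [Units.smul_def, smul_smul, mul_right_comm, Units.mul_inv, one_mul]

theorem isDivisibleSubmodule_divPart : IsDivisibleSubmodule p (divPart p L) := by
  suffices h : divPart p L ≤ (divPart p L).map ((p : ℤ_[p]) • LinearMap.id) from
    fun _ hx ↦ h hx
  refine sSup_le fun D hD x hx ↦ ?_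
  obtain ⟨y, hy, rfl⟩ := hD x hx
  exact ⟨y, le_sSup hD hy, rfl⟩

theorem baer_divPart : Module.Baer ℤ_[p] (divPart p L) :=
  .of_divisible_of_isPrincipalIdealRing fun _ hc x ↦
    let ⟨y, hy, hyx⟩ := isDivisibleSubmodule_divPart.exists_smul_eq hc x.2
    ⟨⟨y, hy⟩, Subtype.ext hyx⟩

end divPart

theorem stmt7_general {p : ℕ} [Fact p.Prime]
    {L : Type*} [AddCommGroup L] [Module ℤ_[p] L]
    (hLcot : ∃ n : ℕ, 0 < n ∧ ∀ x : Cotor p L, n • x = 0) :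
    ∀ (E : Type) [AddCommGroup E] [Module ℤ_[p] E]
      (ι : L →ₗ[ℤ_[p]] E) (π : E →ₗ[ℤ_[p]] ℚ_[p]),
      Function.Injective ι → Function.Surjective π → LinearMap.range ι = LinearMap.ker π →
      ∃ s : ℚ_[p] →ₗ[ℤ_[p]] E, π.comp s = LinearMap.id := by
  intro E _ _ ι π hι hπ hexact
  obtain ⟨n, hn, hcot⟩ := hLcot
  have hn_mem (x : L) : (n : ℤ_[p]) • x ∈ divPart p L := by
    rw [← Submodule.Quotient.mk_eq_zero, Submodule.Quotient.mk_smul, Nat.cast_smul_eq_nsmul]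
    exact hcot _
  obtain ⟨ψ, hψ⟩ := exists_comp_eq_smul_id_of_smul_mem baer_divPart hn_mem hι hπ
    (LinearMap.exact_iff.mpr hexact.symm)
  refine ⟨ψ ∘ₗ ((n : ℚ_[p])⁻¹ • LinearMap.id), LinearMap.ext fun q ↦ ?_⟩
  have hn' : (n : ℚ_[p]) ≠ 0 := Nat.cast_ne_zero.mpr hn.ne'
  simpa [Algebra.smul_def, hn'] using LinearMap.congr_fun hψ ((n : ℚ_[p])⁻¹ • q)

/-- `Ext¹_{ℤ_p}(ℚ_p, L) = 0` for `L` with `L_Div` cofinitely generated and `Cotor(L)` of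
finite exponent; equivalently, every extension `0 → L → E → ℚ_p → 0` of `ℤ_p`-modules
splits. -/
theorem stmt7 {p : ℕ} [Fact p.Prime]
    {L : Type*} [AddCommGroup L] [Module ℤ_[p] L]
    (hLdiv : CofinGen p (divPart p L))
    (hLcot : ∃ n : ℕ, 0 < n ∧ ∀ x : Cotor p L, n • x = 0) :
    ∀ (E : Type) [AddCommGroup E] [Module ℤ_[p] E]
      (ι : L →ₗ[ℤ_[p]] E) (π : E →ₗ[ℤ_[p]] ℚ_[p]),
      Function.Injective ι → Function.Surjective π → LinearMap.range ι = LinearMap.ker π →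
      ∃ s : ℚ_[p] →ₗ[ℤ_[p]] E, π.comp s = LinearMap.id :=
  stmt7_general hLcot
end
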